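/- arXiv:1611.00979 — 7 statements merged into one kernel-verified Lean document; each statement's English description precedes it below -/
import Mathlib

section
/- Let H ∈ ℝ^{N×N} be symmetric positive definite and let Q ∈ ℝ^{N×N} satisfy Q + Qᵀ = e_N e_Nᵀ − e_1 e_1ᵀ. Let σ < −1/2 and set γ = 2σ + 1 and Γ = −σ/γ. Let G : [0,T] → ℝ be continuous and let u : [0,T] → ℝ^N be differentiable and satisfy the SBP–SAT semi-discretization u'(t) = −H⁻¹ Q u(t) + σ H⁻¹ ( e_1 e_1ᵀ u(t) − G(t) e_1 ) for all t ∈ [0,T]. Then u(T)ᵀ H u(T) ≤ u(0)ᵀ H u(0) − γ Γ² ∫₀ᵀ G(t)² dt. In particular, for the conservative choice σ = −1, u(T)ᵀ H u(T) ≤ u(0)ᵀ H u(0) + ∫₀ᵀ G(t)² dt, mimicking the continuous energy estimate term by term. -/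
/-!
Along a solution, `d/dt (uᵀ H u) = 2 uᵀ H u' = -2 uᵀ Q u + 2σ uᵀ (e₁ e₁ᵀ u - G e₁)`,
and the SBP property `Q + Qᵀ = e_N e_Nᵀ - e₁ e₁ᵀ` turns `2 uᵀ Q u` into `u_N² - u₁²`.
Hence the energy rate is `-u_N² + γ u₁² - 2σ G u₁ = -u_N² + γ (u₁ + Γ G)² - γ Γ² G²`,
which is at most `-γ Γ² G²` because `γ < 0`; integrating this bound from `0` to `T`
gives the estimate.
-/

open Matrix

section Calculus

variable {𝕜 : Type*} [NontriviallyNormedField 𝕜] {n : Type*} [Fintype n]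
  {f g : 𝕜 → n → 𝕜} {f' g' : n → 𝕜} {t : 𝕜}

theorem HasDerivAt.dotProduct (hf : HasDerivAt f f' t) (hg : HasDerivAt g g' t) :
    HasDerivAt (fun s => f s ⬝ᵥ g s) (f' ⬝ᵥ g t + f t ⬝ᵥ g') t := by
  have := HasDerivAt.fun_sum (u := Finset.univ) fun i _ =>
    (hasDerivAt_pi.mp hf i).fun_mul (hasDerivAt_pi.mp hg i)
  simpa only [_root_.dotProduct, Finset.sum_add_distrib] using this

theorem HasDerivAt.mulVec {m : Type*} [Fintype m] (A : Matrix m n 𝕜) (hg : HasDerivAt g g' t) :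
    HasDerivAt (fun s => A *ᵥ g s) (A *ᵥ g') t :=
  hasDerivAt_pi.mpr fun i => .fun_sum fun j _ => (hasDerivAt_pi.mp hg j).const_mul (A i j)

end Calculus

section QuadraticForms

variable {n R : Type*} [Fintype n] [CommRing R]

theorem Matrix.IsSymm.dotProduct_mulVec_comm {H : Matrix n n R} (hH : H.IsSymm) (v w : n → R) :
    v ⬝ᵥ (H *ᵥ w) = w ⬝ᵥ (H *ᵥ v) := by
  rw [dotProduct_mulVec, ← mulVec_transpose, hH.eq, dotProduct_comm]

theorem dotProduct_add_transpose_mulVec_self (Q : Matrix n n R) (u : n → R) :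
    u ⬝ᵥ ((Q + Qᵀ) *ᵥ u) = 2 * (u ⬝ᵥ (Q *ᵥ u)) := by
  rw [add_mulVec, dotProduct_add, mulVec_transpose, dotProduct_comm u (u ᵥ* Q),
    ← dotProduct_mulVec, two_mul]

theorem dotProduct_vecMulVec_mulVec (u a b v : n → R) :
    u ⬝ᵥ (vecMulVec a b *ᵥ v) = (u ⬝ᵥ a) * (b ⬝ᵥ v) := by
  rw [vecMulVec_mulVec, op_smul_eq_smul, dotProduct_smul, smul_eq_mul, mul_comm]

variable [DecidableEq n]

noncomputable def sbpSatRhs (H Q : Matrix n n R) (e₁ : n → R) (σ g : R) (u : n → R) : n → R :=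
  -((H⁻¹ * Q) *ᵥ u) + σ • (H⁻¹ *ᵥ (vecMulVec e₁ e₁ *ᵥ u - g • e₁))

theorem mulVec_sbpSatRhs {H : Matrix n n R} (hH : IsUnit H.det) (Q : Matrix n n R) (e₁ : n → R)
    (σ g : R) (u : n → R) :
    H *ᵥ sbpSatRhs H Q e₁ σ g u = -(Q *ᵥ u) + σ • (vecMulVec e₁ e₁ *ᵥ u - g • e₁) := by
  rw [sbpSatRhs, mulVec_add, mulVec_neg, mulVec_smul, mulVec_mulVec, mulVec_mulVec,
    mul_nonsing_inv_cancel_left H Q hH, mul_nonsing_inv _ hH, one_mulVec]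

theorem sbpSat_energy_rate {H Q : Matrix n n R} (hHs : H.IsSymm) (hH : IsUnit H.det)
    {e₁ e_N : n → R} (hQ : Q + Qᵀ = vecMulVec e_N e_N - vecMulVec e₁ e₁) (σ g : R) (u : n → R) :
    sbpSatRhs H Q e₁ σ g u ⬝ᵥ (H *ᵥ u) + u ⬝ᵥ (H *ᵥ sbpSatRhs H Q e₁ σ g u)
      = -(e_N ⬝ᵥ u) ^ 2 + (2 * σ + 1) * (e₁ ⬝ᵥ u) ^ 2 - 2 * σ * g * (e₁ ⬝ᵥ u) := by
  have hQu : 2 * (u ⬝ᵥ (Q *ᵥ u)) = (e_N ⬝ᵥ u) ^ 2 - (e₁ ⬝ᵥ u) ^ 2 := by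
    rw [← dotProduct_add_transpose_mulVec_self, hQ, sub_mulVec, dotProduct_sub,
      dotProduct_vecMulVec_mulVec, dotProduct_vecMulVec_mulVec, dotProduct_comm u e_N,
      dotProduct_comm u e₁, sq, sq]
  rw [hHs.dotProduct_mulVec_comm, mulVec_sbpSatRhs hH, dotProduct_add, dotProduct_neg,
    dotProduct_smul, dotProduct_sub, dotProduct_vecMulVec_mulVec, dotProduct_smul,
    dotProduct_comm u e₁, smul_eq_mul, smul_eq_mul]
  linear_combination -hQu

end QuadraticForms

theorem neg_sq_add_sat_term_le {σ γ Γ : ℝ} (hγ : γ ≤ 0) (hγΓ : γ * Γ = -σ) (x y g : ℝ) :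
    -y ^ 2 + γ * x ^ 2 - 2 * σ * g * x ≤ -(γ * Γ ^ 2) * g ^ 2 := by
  have hsquare : -y ^ 2 + γ * x ^ 2 - 2 * σ * g * x
      = -y ^ 2 + γ * (x + Γ * g) ^ 2 - γ * Γ ^ 2 * g ^ 2 := by
    linear_combination (-2 * g * x) * hγΓ
  rw [hsquare]
  linarith [sq_nonneg y, mul_nonpos_of_nonpos_of_nonneg hγ (sq_nonneg (x + Γ * g))]

open intervalIntegral

/-- **Energy estimate for the SBP–SAT semi-discretization of linear advection.**
Given a symmetric positive definite norm matrix `H` and an almost-skew-symmetric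
`Q` with `Q + Qᵀ = e_N e_Nᵀ − e_1 e_1ᵀ`, any solution of the SBP–SAT ODE
`u' = −H⁻¹ Q u + σ H⁻¹ (e_1 e_1ᵀ u − G e_1)` with SAT parameter `σ < −1/2`
satisfies the discrete energy estimate
`u(T)ᵀ H u(T) ≤ u(0)ᵀ H u(0) − γ Γ² ∫₀ᵀ G²`, with `γ = 2σ+1`, `Γ = −σ/γ`;
in particular for `σ = −1` one gets `u(T)ᵀ H u(T) ≤ u(0)ᵀ H u(0) + ∫₀ᵀ G²`. -/
theorem sbp_sat_energy_estimate
    {N : ℕ} (T : ℝ) (hT : 0 < T)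
    (H Q : Matrix (Fin N) (Fin N) ℝ) (hH : H.PosDef)
    (e1 eN : Fin N → ℝ)
    (hQ : Q + Qᵀ = vecMulVec eN eN - vecMulVec e1 e1)
    (σ γ Γ : ℝ) (hσ : σ < -(1/2)) (hγ : γ = 2 * σ + 1) (hΓ : Γ = -σ / γ)
    (G : ℝ → ℝ) (hG : ContinuousOn G (Set.Icc 0 T))
    (u u' : ℝ → Fin N → ℝ)
    (hu : ∀ t ∈ Set.Icc (0:ℝ) T, HasDerivAt u (u' t) t)
    (hode : ∀ t ∈ Set.Icc (0:ℝ) T,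
      u' t = -((H⁻¹ * Q) *ᵥ u t)
        + σ • (H⁻¹ *ᵥ ((vecMulVec e1 e1) *ᵥ u t - G t • e1))) :
    (u T ⬝ᵥ (H *ᵥ u T) ≤ u 0 ⬝ᵥ (H *ᵥ u 0) - γ * Γ ^ 2 * ∫ t in (0:ℝ)..T, G t ^ 2)
    ∧ (σ = -1 →
        u T ⬝ᵥ (H *ᵥ u T) ≤ u 0 ⬝ᵥ (H *ᵥ u 0) + ∫ t in (0:ℝ)..T, G t ^ 2) := by
  have hγ0 : γ < 0 := by linarith
  have hγΓ : γ * Γ = -σ := by rw [hΓ]; field_simp [hγ0.ne]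
  have hHs : H.IsSymm := isHermitian_iff_isSymm.mp hH.isHermitian
  have hHdet : IsUnit H.det := (isUnit_iff_isUnit_det H).mp hH.isUnit
  have hrate : ∀ t ∈ Set.Icc (0:ℝ) T, HasDerivAt (fun s => u s ⬝ᵥ (H *ᵥ u s))
      (-(eN ⬝ᵥ u t) ^ 2 + γ * (e1 ⬝ᵥ u t) ^ 2 - 2 * σ * G t * (e1 ⬝ᵥ u t)) t := by
    intro t ht
    have := (hu t ht).dotProduct ((hu t ht).mulVec H)
    rwa [hode t ht, ← sbpSatRhs, sbpSat_energy_rate hHs hHdet hQ, ← hγ] at this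
  have henergy := sub_le_integral_of_hasDeriv_right_of_le
    (φ := fun t => -(γ * Γ ^ 2) * G t ^ 2) hT.le
    (fun t ht => (hrate t ht).continuousAt.continuousWithinAt)
    (fun t ht => (hrate t (Set.Ioo_subset_Icc_self ht)).hasDerivWithinAt)
    (((hG.pow 2).const_mul (-(γ * Γ ^ 2))).integrableOn_Icc)
    (fun t _ => neg_sq_add_sat_term_le hγ0.le hγΓ _ _ _)
  rw [integral_const_mul] at henergy
  refine ⟨by linarith, fun hσ1 => ?_⟩
  have hcoef : γ * Γ ^ 2 = -1 := by subst hσ1; rw [hΓ, hγ]; norm_num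
  rw [hcoef] at henergy
  linarith
end

section
/- Let p ≥ 1, let η_L ∈ ℝ^{N_L} and η_Γ ∈ ℝ^{N_Γ} be node vectors, and let M_L ∈ ℝ^{N_L×N_L} and M_Γ ∈ ℝ^{N_Γ×N_Γ} be norm matrices whose quadratures assign different values to the monomial η^{2p}, i.e. (η_L^p)ᵀ M_L η_L^p ≠ (η_Γ^p)ᵀ M_Γ η_Γ^p (as happens, in particular, when M_L is exact only up to degree 2p−1 so that (η_L^p)ᵀ M_L η_L^p differs from the exact integral of η^{2p}, while M_Γ is exact on η^{2p} or carries a different error). Then there exists no projection operator R ∈ ℝ^{N_Γ×N_L} of degree p, that is, no matrix R satisfying both R η_L^k = η_Γ^k and Rᵀ M_Γ η_Γ^k = M_L η_L^k for all k = 0, …, p. -/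
open Matrix

/-- **Nonexistence of degree-`p` projection operators when the quadratures
disagree on the monomial of degree `2p`.**
If the quadrature values `(η_L^p)ᵀ M_L η_L^p` and `(η_Γ^p)ᵀ M_Γ η_Γ^p` differ
(as happens e.g. when `M_L` is exact only up to degree `2p−1` while `M_Γ` is
exact on `η^{2p}` or carries a different error), then no matrix
`R : ℝ^{N_Γ×N_L}` can satisfy both `R η_L^k = η_Γ^k` and
`Rᵀ M_Γ η_Γ^k = M_L η_L^k` for all `k = 0, …, p`. -/
theorem no_degree_p_projection
    {NL NΓ : ℕ} (p : ℕ) (hp : 1 ≤ p)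
    (ηL : Fin NL → ℝ) (ηΓ : Fin NΓ → ℝ)
    (ML : Matrix (Fin NL) (Fin NL) ℝ) (MΓ : Matrix (Fin NΓ) (Fin NΓ) ℝ)
    (hdiff : (fun i => ηL i ^ p) ⬝ᵥ (ML *ᵥ fun i => ηL i ^ p) ≠
             (fun i => ηΓ i ^ p) ⬝ᵥ (MΓ *ᵥ fun i => ηΓ i ^ p)) :
    ¬ ∃ R : Matrix (Fin NΓ) (Fin NL) ℝ,
        ∀ k ≤ p,
          (R *ᵥ fun i => ηL i ^ k) = (fun i => ηΓ i ^ k) ∧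
          (Rᵀ *ᵥ (MΓ *ᵥ fun i => ηΓ i ^ k)) = (ML *ᵥ fun i => ηL i ^ k) := by
  rintro ⟨R, hR⟩
  obtain ⟨h1, h2⟩ := hR p le_rfl
  apply hdiff
  calc (fun i => ηL i ^ p) ⬝ᵥ (ML *ᵥ fun i => ηL i ^ p)
      = (fun i => ηL i ^ p) ⬝ᵥ (Rᵀ *ᵥ (MΓ *ᵥ fun i => ηΓ i ^ p)) := by rw [h2]
    _ = (R *ᵥ fun i => ηL i ^ p) ⬝ᵥ (MΓ *ᵥ fun i => ηΓ i ^ p) := by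
        rw [dotProduct_mulVec, vecMul_transpose]
    _ = (fun i => ηΓ i ^ p) ⬝ᵥ (MΓ *ᵥ fun i => ηΓ i ^ p) := by rw [h1]
end

section
/- Let η_L ∈ ℝ^{N_L} and η_Γ ∈ ℝ^{N_Γ} be node vectors, let M_L ∈ ℝ^{N_L×N_L} and M_Γ ∈ ℝ^{N_Γ×N_Γ} be matrices, and suppose R ∈ ℝ^{N_Γ×N_L} satisfies R η_L^p = η_Γ^p and Rᵀ M_Γ η_Γ^p = M_L η_L^p. Then the two quadratures necessarily agree on the monomial of degree 2p: (η_Γ^p)ᵀ M_Γ η_Γ^p = (η_L^p)ᵀ M_L η_L^p. -/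
open Matrix

/-- **A degree-`p` projection operator forces the two quadratures to agree on
the monomial of degree `2p`.**
If `R η_L^p = η_Γ^p` and `Rᵀ M_Γ η_Γ^p = M_L η_L^p`, then
`(η_Γ^p)ᵀ M_Γ η_Γ^p = (η_L^p)ᵀ M_L η_L^p`. -/
theorem projection_forces_quadrature_agreement
    {NL NΓ : ℕ} (p : ℕ)
    (ηL : Fin NL → ℝ) (ηΓ : Fin NΓ → ℝ)
    (ML : Matrix (Fin NL) (Fin NL) ℝ) (MΓ : Matrix (Fin NΓ) (Fin NΓ) ℝ)
    (R : Matrix (Fin NΓ) (Fin NL) ℝ)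
    (hR1 : (R *ᵥ fun i => ηL i ^ p) = (fun i => ηΓ i ^ p))
    (hR2 : (Rᵀ *ᵥ (MΓ *ᵥ fun i => ηΓ i ^ p)) = (ML *ᵥ fun i => ηL i ^ p)) :
    (fun i => ηΓ i ^ p) ⬝ᵥ (MΓ *ᵥ fun i => ηΓ i ^ p) =
      (fun i => ηL i ^ p) ⬝ᵥ (ML *ᵥ fun i => ηL i ^ p) := by
  rw [← hR1, ← hR2]
  rw [Matrix.mulVec_transpose, dotProduct_comm, Matrix.dotProduct_mulVec,
    dotProduct_comm, hR1]
end

section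
/- Let p ≥ 1 and let ξ ∈ ℝ^N be a vector of N pairwise distinct nodes with first entry ξ_1 = a and last entry ξ_N = b, where a < b. Then the following are equivalent: (i) there exists a quadrature rule with positive weights of degree ≥ 2p on these nodes, i.e. a diagonal matrix H ∈ ℝ^{N×N} with positive diagonal entries such that 1ᵀ H ξ^k = (b^{k+1} − a^{k+1})/(k+1) for all k = 0, …, 2p; (ii) there exists a degree preserving SBP operator of degree p on these nodes, i.e. a diagonal positive-definite norm matrix H of quadrature degree ≥ 2p together with a matrix Q ∈ ℝ^{N×N} satisfying Q + Qᵀ = e_N e_Nᵀ − e_1 e_1ᵀ and Q ξ^k = k H ξ^{k−1} for k = 0, …, p (with ξ^{−1} interpreted as the zero vector). -/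
/-!
Let `V` be the matrix of monomials `ξ_i ^ k`, `k ≤ p`, and `D = H V'` the matrix of their
weighted derivatives. A quadrature `H` that is exact up to degree `2p` integrates the derivative
of `x ^ j * x ^ k` exactly, which by the product rule is the summation-by-parts identity
`Vᵀ D + Dᵀ V = Vᵀ E V`. It also forces `V` to have trivial kernel: a polynomial `q` of degree
`≤ p` vanishing at all nodes has `∫ q² = ∑ wᵢ q(ξᵢ)² = 0`. Hence `VᵀV` is invertible, so the
skew-compatible system `S V = D - E V / 2` has a skew solution `S`, and `Q = E / 2 + S` is the
SBP operator.
-/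

open Matrix Polynomial

theorem exists_transpose_eq_neg_and_mul_eq {m n R : Type*} [Fintype m] [Fintype n]
    [DecidableEq n] [CommRing R] (V Y : Matrix m n R) (hV : IsUnit (Vᵀ * V))
    (hY : (Vᵀ * Y)ᵀ = -(Vᵀ * Y)) : ∃ S : Matrix m m R, Sᵀ = -S ∧ S * V = Y := by
  set P := Vᵀ * V with hP
  set A := Vᵀ * Y
  have hPinv : P⁻¹ * P = 1 := nonsing_inv_mul P ((isUnit_iff_isUnit_det P).mp hV)
  have hPT : P⁻¹ᵀ = P⁻¹ := by rw [transpose_nonsing_inv, hP, transpose_mul, transpose_transpose]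
  have hYV : Yᵀ * V = -A := by rw [← hY, transpose_mul, transpose_transpose]
  -- `Y P⁻¹ Vᵀ` solves `S V = Y`; the other two terms make it skew and vanish on the range of
  -- `V`, because `Yᵀ V = -A`.
  refine ⟨Y * P⁻¹ * Vᵀ - V * P⁻¹ * Yᵀ - V * P⁻¹ * A * P⁻¹ * Vᵀ, ?_, ?_⟩
  · simp only [transpose_sub, transpose_mul, transpose_transpose, hPT, hY, Matrix.mul_neg,
      Matrix.neg_mul, Matrix.mul_assoc]
    abel
  · simp only [Matrix.sub_mul, Matrix.mul_assoc, ← hP, hYV, hPinv, Matrix.mul_one, Matrix.mul_neg]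
    abel

theorem exists_add_transpose_eq_and_mul_eq {m n K : Type*} [Fintype m] [Fintype n]
    [DecidableEq n] [Field K] [NeZero (2 : K)] (V D : Matrix m n K) (E : Matrix m m K)
    (hE : Eᵀ = E) (hV : IsUnit (Vᵀ * V)) (hD : Vᵀ * D + Dᵀ * V = Vᵀ * E * V) :
    ∃ Q : Matrix m m K, Q + Qᵀ = E ∧ Q * V = D := by
  obtain ⟨S, hS, hSV⟩ := exists_transpose_eq_neg_and_mul_eq V (D - (2⁻¹ : K) • (E * V)) hV (by
    rw [← add_eq_zero_iff_eq_neg]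
    simp only [transpose_mul, transpose_sub, transpose_smul, transpose_transpose, hE,
      Matrix.mul_sub, Matrix.mul_smul, Matrix.mul_assoc]
    rw [← Matrix.mul_assoc, ← hD]
    match_scalars <;> field_simp <;> ring)
  refine ⟨(2⁻¹ : K) • E + S, ?_, ?_⟩
  · rw [transpose_add, transpose_smul, hE, hS]
    match_scalars <;> field_simp <;> ring
  · rw [Matrix.add_mul, hSV, Matrix.smul_mul]
    abel

theorem transpose_mul_vecMulVec_single_mul {l m n R : Type*} [Fintype m] [DecidableEq m]
    [CommSemiring R] (M : Matrix m l R) (N : Matrix m n R) (i : m) :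
    Mᵀ * vecMulVec (Pi.single i (1 : R)) (Pi.single i 1) * N = vecMulVec (M i) (N i) := by
  ext j k
  simp [mul_apply, vecMulVec_apply, Pi.single_apply]

def monomialMatrix {ι R : Type*} [Monoid R] (ξ : ι → R) (n : ℕ) : Matrix ι (Fin n) R :=
  of fun i k => ξ i ^ (k : ℕ)

noncomputable def derivMonomialMatrix {ι R : Type*} [CommSemiring R] (ξ : ι → R) (n : ℕ) :
    Matrix ι (Fin n) R :=
  of fun i k => (derivative (X ^ (k : ℕ))).eval (ξ i)

def IsQuadratureOfDegree {ι : Type*} [Fintype ι] (w ξ : ι → ℝ) (a b : ℝ) (d : ℕ) : Prop :=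
  ∀ k ≤ d, ∑ i, w i * ξ i ^ k = ∫ x in a..b, x ^ k

namespace IsQuadratureOfDegree

variable {ι : Type*} [Fintype ι] {w ξ : ι → ℝ} {a b : ℝ} {d : ℕ}

theorem sum_mul_eval_eq_integral (h : IsQuadratureOfDegree w ξ a b d) {f : ℝ[X]}
    (hf : f.natDegree ≤ d) : ∑ i, w i * f.eval (ξ i) = ∫ x in a..b, f.eval x := by
  have heval (x : ℝ) : f.eval x = ∑ k ∈ Finset.range (d + 1), f.coeff k * x ^ k :=
    eval_eq_sum_range' (Nat.lt_succ_of_le hf) x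
  simp_rw [heval, Finset.mul_sum]
  rw [Finset.sum_comm, intervalIntegral.integral_finsetSum fun k _ =>
    ((continuous_pow k).const_mul _).intervalIntegrable _ _]
  refine Finset.sum_congr rfl fun k hk => ?_
  rw [intervalIntegral.integral_const_mul, ← h k (Nat.lt_succ_iff.mp (Finset.mem_range.mp hk)),
    Finset.mul_sum]
  exact Finset.sum_congr rfl fun i _ => by ring

theorem sum_mul_eval_derivative (h : IsQuadratureOfDegree w ξ a b d) {f : ℝ[X]}
    (hf : f.natDegree ≤ d + 1) :
    ∑ i, w i * f.derivative.eval (ξ i) = f.eval b - f.eval a := by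
  rw [h.sum_mul_eval_eq_integral ((natDegree_derivative_le f).trans (by omega))]
  exact intervalIntegral.integral_eq_sub_of_hasDerivAt (fun x _ => f.hasDerivAt x)
    (f.derivative.continuous.intervalIntegrable _ _)

theorem eq_zero_of_eval_eq_zero {p : ℕ} (h : IsQuadratureOfDegree w ξ a b (2 * p)) (hab : a < b)
    {q : ℝ[X]} (hq : q.natDegree ≤ p) (hroot : ∀ i, q.eval (ξ i) = 0) : q = 0 := by
  by_contra hne
  obtain ⟨c, hc, hcq⟩ := (Set.Icc_infinite hab).exists_notMem_finset q.roots.toFinset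
  have hpos : 0 < ∫ x in a..b, (q ^ 2).eval x :=
    intervalIntegral.integral_pos hab (q ^ 2).continuous.continuousOn
      (fun x _ => by simpa using sq_nonneg (q.eval x))
      ⟨c, hc, by simpa [hne, sq_pos_iff] using hcq⟩
  have hzero : ∑ i, w i * (q ^ 2).eval (ξ i) = 0 := by simp [hroot]
  rw [h.sum_mul_eval_eq_integral (natDegree_pow_le.trans (by omega))] at hzero
  exact hpos.ne' hzero


theorem summation_by_parts [DecidableEq ι] {p : ℕ} (h : IsQuadratureOfDegree w ξ a b (2 * p))
    {i₀ i₁ : ι} (ha : ξ i₀ = a) (hb : ξ i₁ = b) :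
    (monomialMatrix ξ (p + 1))ᵀ * (diagonal w * derivMonomialMatrix ξ (p + 1)) +
        (diagonal w * derivMonomialMatrix ξ (p + 1))ᵀ * monomialMatrix ξ (p + 1) =
      (monomialMatrix ξ (p + 1))ᵀ * (vecMulVec (Pi.single i₁ (1 : ℝ)) (Pi.single i₁ 1) -
        vecMulVec (Pi.single i₀ 1) (Pi.single i₀ 1)) * monomialMatrix ξ (p + 1) := by
  ext j k
  have hdeg : (X ^ (j : ℕ) * X ^ (k : ℕ) : ℝ[X]).natDegree ≤ 2 * p + 1 := by
    rw [← pow_add, natDegree_X_pow]; omega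
  have hsum := h.sum_mul_eval_derivative hdeg
  simp only [derivative_mul, eval_add, eval_mul, eval_pow, eval_X] at hsum
  rw [Matrix.mul_sub, Matrix.sub_mul, transpose_mul_vecMulVec_single_mul,
    transpose_mul_vecMulVec_single_mul]
  simp only [Matrix.add_apply, Matrix.sub_apply, vecMulVec_apply, mul_apply, transpose_apply,
    diagonal_apply, ite_mul, zero_mul, Finset.sum_ite_eq, Finset.mem_univ, if_true,
    monomialMatrix, derivMonomialMatrix, of_apply, ha, hb, ← hsum, ← Finset.sum_add_distrib]
  exact Finset.sum_congr rfl fun i _ => by ring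

theorem injective_mulVec_monomialMatrix {p : ℕ} (h : IsQuadratureOfDegree w ξ a b (2 * p))
    (hab : a < b) : Function.Injective (monomialMatrix ξ (p + 1)).mulVec := by
  suffices ∀ c, monomialMatrix ξ (p + 1) *ᵥ c = 0 → c = 0 from fun c c' hcc =>
    sub_eq_zero.mp (this _ (by rw [mulVec_sub, hcc, sub_self]))
  intro c hc
  have hq : ∑ k : Fin (p + 1), C (c k) * X ^ (k : ℕ) = 0 := by
    refine h.eq_zero_of_eval_eq_zero hab (natDegree_sum_le_of_forall_le _ _ fun k _ =>
      (natDegree_C_mul_X_pow_le _ _).trans (by omega)) fun i => ?_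
    simp only [eval_finsetSum, eval_mul, eval_C, eval_pow, eval_X]
    simpa [monomialMatrix, mulVec, dotProduct, mul_comm] using congrFun hc i
  funext k
  simpa [finsetSum_coeff, coeff_C_mul_X_pow, Fin.val_inj] using congrArg (coeff · k) hq

end IsQuadratureOfDegree

theorem mulVec_pow_eq_of_mul_monomialMatrix_eq {ι : Type*} [Fintype ι] [DecidableEq ι]
    {Q : Matrix ι ι ℝ} {w ξ : ι → ℝ} {n : ℕ}
    (hQ : Q * monomialMatrix ξ n = diagonal w * derivMonomialMatrix ξ n) {k : ℕ} (hk : k < n) :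
    Q *ᵥ (fun i => ξ i ^ k) =
      (k : ℝ) • (diagonal w *ᵥ fun i => if k = 0 then 0 else ξ i ^ (k - 1)) := by
  funext i
  have hcol := congrFun (congrFun hQ i) ⟨k, hk⟩
  rw [diagonal_mul] at hcol
  simp only [mul_apply, monomialMatrix, derivMonomialMatrix, of_apply, derivative_X_pow,
    eval_mul, eval_C, eval_pow, eval_X] at hcol
  rw [Pi.smul_apply, mulVec_diagonal, smul_eq_mul, mulVec, dotProduct, hcol]
  split_ifs with hk0
  · simp [hk0]
  · ring

/-- **Existence of degree preserving SBP operators.**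
On a set of `N` pairwise distinct nodes with endpoints `a < b`, a quadrature
rule with positive weights of degree `≥ 2p` exists if and only if a degree
preserving SBP operator of degree `p` exists, i.e. a diagonal positive-definite
norm matrix `H` of quadrature degree `≥ 2p` together with `Q` satisfying
`Q + Qᵀ = e_N e_Nᵀ − e_1 e_1ᵀ` and `Q ξ^k = k H ξ^{k−1}` for `k = 0, …, p`
(with `ξ^{−1}` interpreted as the zero vector). -/
theorem degree_preserving_sbp_iff_positive_quadrature
    {N : ℕ} (p : ℕ) (hN : 2 ≤ N)
    (ξ : Fin N → ℝ)
    (a b : ℝ) (hab : a < b)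
    (ha : ξ ⟨0, by omega⟩ = a) (hb : ξ ⟨N - 1, by omega⟩ = b) :
    (∃ H : Matrix (Fin N) (Fin N) ℝ,
        H.IsDiag ∧ (∀ i, 0 < H i i) ∧
        (∀ k ≤ 2 * p,
          (fun _ => (1:ℝ)) ⬝ᵥ (H *ᵥ fun i => ξ i ^ k) =
            (b ^ (k + 1) - a ^ (k + 1)) / ((k : ℝ) + 1)))
    ↔
    (∃ H Q : Matrix (Fin N) (Fin N) ℝ,
        H.IsDiag ∧ (∀ i, 0 < H i i) ∧
        (∀ k ≤ 2 * p,
          (fun _ => (1:ℝ)) ⬝ᵥ (H *ᵥ fun i => ξ i ^ k) =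
            (b ^ (k + 1) - a ^ (k + 1)) / ((k : ℝ) + 1)) ∧
        Q + Qᵀ =
          vecMulVec (Pi.single (⟨N - 1, by omega⟩ : Fin N) 1)
              (Pi.single (⟨N - 1, by omega⟩ : Fin N) 1)
            - vecMulVec (Pi.single (⟨0, by omega⟩ : Fin N) 1)
              (Pi.single (⟨0, by omega⟩ : Fin N) 1) ∧
        (∀ k ≤ p,
          Q *ᵥ (fun i => ξ i ^ k) =
            (k : ℝ) • (H *ᵥ fun i => if k = 0 then 0 else ξ i ^ (k - 1)))) := by
  refine ⟨fun ⟨H, hdiag, hpos, hquad⟩ => ?_,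
    fun ⟨H, _, hdiag, hpos, hquad, _⟩ => ⟨H, hdiag, hpos, hquad⟩⟩
  have hH : H = diagonal H.diag := hdiag.diagonal_diag.symm
  have hw : IsQuadratureOfDegree H.diag ξ a b (2 * p) := fun k hk => by
    rw [integral_pow, ← hquad k hk, hH]
    simp [mulVec_diagonal, dotProduct]
  set V := monomialMatrix ξ (p + 1)
  have hV : IsUnit (Vᵀ * V) := by
    simpa using (PosDef.conjTranspose_mul_self V (hw.injective_mulVec_monomialMatrix hab)).isUnit
  obtain ⟨Q, hQE, hQV⟩ := exists_add_transpose_eq_and_mul_eq V _ _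
    (by simp [transpose_vecMulVec]) hV (hw.summation_by_parts ha hb)
  refine ⟨H, Q, hdiag, hpos, hquad, hQE, fun k hk => ?_⟩
  rw [hH]
  exact mulVec_pow_eq_of_mul_monomialMatrix_eq hQV (Nat.lt_succ_of_le hk)
end

section
/- Under the two-element tensor-product SBP–SAT setting, assume the projection matrices satisfy the degree-0 (conservation) conditions R_L^{1D} 1 = 1_Γ, R_R^{1D} 1 = 1_Γ, (R_L^{1D})ᵀ M_Γ 1_Γ = H_{η,L} 1, and (R_R^{1D})ᵀ M_Γ 1_Γ = H_{η,R} 1, where 1_Γ ∈ ℝ^{N_Γ} is the all-ones vector. Let u_L(t), u_R(t) be differentiable curves solving the semi-discrete scheme. Then all interface and SAT contributions to the time derivative of the total discrete mass cancel exactly: J_L 1ᵀ H_L u_L'(t) + J_R 1ᵀ H_R u_R'(t) = λ ( 1ᵀ E_{ξ1,L} u_L − 1ᵀ E_{ξN,R} u_R ) − λ_η ( 1ᵀ (E_{ηN,L} − E_{η1,L}) u_L + 1ᵀ (E_{ηN,R} − E_{η1,R}) u_R ); only terms associated with the non-shared outer boundaries remain, so the non-conforming discretization is discretely conservative across the interface.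 -/
open Matrix
open scoped Kronecker

noncomputable section

/-- Boundary matrix `e_i e_iᵀ` built from the `i`-th standard basis vector. -/
def bmat {n : ℕ} (i : Fin n) : Matrix (Fin n) (Fin n) ℝ :=
  vecMulVec (Pi.single i 1) (Pi.single i 1)

/-- Two-dimensional projection `e_iᵀ ⊗ R1` onto the intermediate interface grid:
it restricts the solution to the face `ξ`-index `i` and applies the
one-dimensional projection `R1`. -/
def proj2D {nx ny NΓ : ℕ} (i : Fin nx) (R1 : Matrix (Fin NΓ) (Fin ny) ℝ) :
    Matrix (Fin NΓ) (Fin nx × Fin ny) ℝ :=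
  Matrix.of fun g q => (if q.1 = i then 1 else 0) * R1 g q.2


lemma ones_dot {m n : Type*} [Fintype m] [Fintype n] (M : Matrix m n ℝ) (v : n → ℝ) :
    (fun _ => (1:ℝ)) ⬝ᵥ (M *ᵥ v) = (Mᵀ *ᵥ fun _ => (1:ℝ)) ⬝ᵥ v := by
  rw [dotProduct_mulVec, ← mulVec_transpose]

lemma diag_symm {n : Type*} {H : Matrix n n ℝ} (h : H.IsDiag) : Hᵀ = H := by
  ext i j
  by_cases hij : i = j
  · subst hij; simp
  · simp [transpose_apply, h hij, h (Ne.symm hij)]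

lemma bmat_mulVec_one {n : ℕ} (i : Fin n) :
    bmat i *ᵥ (fun _ => (1:ℝ)) = Pi.single i 1 := by
  ext j
  simp [bmat, mulVec, dotProduct, vecMulVec_apply, Pi.single_apply, Finset.mul_sum]

lemma bmat_transpose {n : ℕ} (i : Fin n) : (bmat i)ᵀ = bmat i := by
  ext j k; simp [bmat, vecMulVec_apply, mul_comm]

lemma kron_T_one {m m' n n' : ℕ} (A : Matrix (Fin m) (Fin m') ℝ) (B : Matrix (Fin n) (Fin n') ℝ) :
    (A ⊗ₖ B)ᵀ *ᵥ (fun _ => (1:ℝ)) =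
      fun p => (Aᵀ *ᵥ fun _ => (1:ℝ)) p.1 * (Bᵀ *ᵥ fun _ => (1:ℝ)) p.2 := by
  ext p
  simp only [mulVec, dotProduct, transpose_apply, kroneckerMap_apply, mul_one,
    Fintype.sum_prod_type]
  rw [← Finset.sum_mul_sum]

lemma proj2D_mulVec_one {nx ny NΓ : ℕ} (i : Fin nx) (R1 : Matrix (Fin NΓ) (Fin ny) ℝ) :
    proj2D i R1 *ᵥ (fun _ => (1:ℝ)) = R1 *ᵥ (fun _ => (1:ℝ)) := by
  ext g
  simp [proj2D, mulVec, dotProduct, Fintype.sum_prod_type, Finset.sum_ite_eq',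
    apply_ite]

lemma proj2D_T_mulVec {nx ny NΓ : ℕ} (i : Fin nx) (R1 : Matrix (Fin NΓ) (Fin ny) ℝ)
    (c : Fin NΓ → ℝ) :
    (proj2D i R1)ᵀ *ᵥ c = fun p => (if p.1 = i then 1 else 0) * (R1ᵀ *ᵥ c) p.2 := by
  ext p
  simp [proj2D, mulVec, dotProduct, Finset.mul_sum]

/-- **Discrete conservation of the non-conforming SBP–SAT coupling.**
In the two-element tensor-product SBP–SAT setting, if the projection matrices
satisfy the degree-0 (conservation) conditions, then all interface and SAT
contributions to the time derivative of the total discrete mass cancel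
exactly; only the terms associated with the non-shared outer boundaries
remain. -/
theorem nonconforming_conservation
    {nxL nyL nxR nyR NΓ : ℕ}
    -- one-dimensional SBP operators on each element
    (HxL : Matrix (Fin (nxL + 1)) (Fin (nxL + 1)) ℝ)
    (HyL : Matrix (Fin (nyL + 1)) (Fin (nyL + 1)) ℝ)
    (HxR : Matrix (Fin (nxR + 1)) (Fin (nxR + 1)) ℝ)
    (HyR : Matrix (Fin (nyR + 1)) (Fin (nyR + 1)) ℝ)
    (QxL : Matrix (Fin (nxL + 1)) (Fin (nxL + 1)) ℝ)
    (QyL : Matrix (Fin (nyL + 1)) (Fin (nyL + 1)) ℝ)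
    (QxR : Matrix (Fin (nxR + 1)) (Fin (nxR + 1)) ℝ)
    (QyR : Matrix (Fin (nyR + 1)) (Fin (nyR + 1)) ℝ)
    (hHxLd : HxL.IsDiag) (hHxLp : ∀ i, 0 < HxL i i)
    (hHyLd : HyL.IsDiag) (hHyLp : ∀ i, 0 < HyL i i)
    (hHxRd : HxR.IsDiag) (hHxRp : ∀ i, 0 < HxR i i)
    (hHyRd : HyR.IsDiag) (hHyRp : ∀ i, 0 < HyR i i)
    (hQxL : QxL + QxLᵀ = bmat (Fin.last nxL) - bmat 0)
    (hQyL : QyL + QyLᵀ = bmat (Fin.last nyL) - bmat 0)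
    (hQxR : QxR + QxRᵀ = bmat (Fin.last nxR) - bmat 0)
    (hQyR : QyR + QyRᵀ = bmat (Fin.last nyR) - bmat 0)
    (hQxL1 : QxL *ᵥ (fun _ => (1:ℝ)) = 0) (hQyL1 : QyL *ᵥ (fun _ => (1:ℝ)) = 0)
    (hQxR1 : QxR *ᵥ (fun _ => (1:ℝ)) = 0) (hQyR1 : QyR *ᵥ (fun _ => (1:ℝ)) = 0)
    -- intermediate interface grid
    (MΓ : Matrix (Fin NΓ) (Fin NΓ) ℝ) (hMΓ : MΓ.PosSemidef)
    (RL1 : Matrix (Fin NΓ) (Fin (nyL + 1)) ℝ)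
    (RR1 : Matrix (Fin NΓ) (Fin (nyR + 1)) ℝ)
    -- degree-0 (conservation) conditions on the projections
    (hRL10 : RL1 *ᵥ (fun _ => (1:ℝ)) = fun _ => (1:ℝ))
    (hRR10 : RR1 *ᵥ (fun _ => (1:ℝ)) = fun _ => (1:ℝ))
    (hRL10d : RL1ᵀ *ᵥ (MΓ *ᵥ fun _ => (1:ℝ)) = HyL *ᵥ fun _ => (1:ℝ))
    (hRR10d : RR1ᵀ *ᵥ (MΓ *ᵥ fun _ => (1:ℝ)) = HyR *ᵥ fun _ => (1:ℝ))
    -- two-dimensional operators as Kronecker products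
    (HL : Matrix (Fin (nxL + 1) × Fin (nyL + 1)) (Fin (nxL + 1) × Fin (nyL + 1)) ℝ)
    (hHL : HL = HxL ⊗ₖ HyL)
    (QξL : Matrix (Fin (nxL + 1) × Fin (nyL + 1)) (Fin (nxL + 1) × Fin (nyL + 1)) ℝ)
    (hQξL : QξL = QxL ⊗ₖ HyL)
    (QηL : Matrix (Fin (nxL + 1) × Fin (nyL + 1)) (Fin (nxL + 1) × Fin (nyL + 1)) ℝ)
    (hQηL : QηL = HxL ⊗ₖ QyL)
    (ExNL : Matrix (Fin (nxL + 1) × Fin (nyL + 1)) (Fin (nxL + 1) × Fin (nyL + 1)) ℝ)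
    (hExNL : ExNL = bmat (Fin.last nxL) ⊗ₖ HyL)
    (Ex1L : Matrix (Fin (nxL + 1) × Fin (nyL + 1)) (Fin (nxL + 1) × Fin (nyL + 1)) ℝ)
    (hEx1L : Ex1L = bmat 0 ⊗ₖ HyL)
    (EyNL : Matrix (Fin (nxL + 1) × Fin (nyL + 1)) (Fin (nxL + 1) × Fin (nyL + 1)) ℝ)
    (hEyNL : EyNL = HxL ⊗ₖ bmat (Fin.last nyL))
    (Ey1L : Matrix (Fin (nxL + 1) × Fin (nyL + 1)) (Fin (nxL + 1) × Fin (nyL + 1)) ℝ)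
    (hEy1L : Ey1L = HxL ⊗ₖ bmat 0)
    (HR : Matrix (Fin (nxR + 1) × Fin (nyR + 1)) (Fin (nxR + 1) × Fin (nyR + 1)) ℝ)
    (hHR : HR = HxR ⊗ₖ HyR)
    (QξR : Matrix (Fin (nxR + 1) × Fin (nyR + 1)) (Fin (nxR + 1) × Fin (nyR + 1)) ℝ)
    (hQξR : QξR = QxR ⊗ₖ HyR)
    (QηR : Matrix (Fin (nxR + 1) × Fin (nyR + 1)) (Fin (nxR + 1) × Fin (nyR + 1)) ℝ)
    (hQηR : QηR = HxR ⊗ₖ QyR)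
    (ExNR : Matrix (Fin (nxR + 1) × Fin (nyR + 1)) (Fin (nxR + 1) × Fin (nyR + 1)) ℝ)
    (hExNR : ExNR = bmat (Fin.last nxR) ⊗ₖ HyR)
    (Ex1R : Matrix (Fin (nxR + 1) × Fin (nyR + 1)) (Fin (nxR + 1) × Fin (nyR + 1)) ℝ)
    (hEx1R : Ex1R = bmat 0 ⊗ₖ HyR)
    (EyNR : Matrix (Fin (nxR + 1) × Fin (nyR + 1)) (Fin (nxR + 1) × Fin (nyR + 1)) ℝ)
    (hEyNR : EyNR = HxR ⊗ₖ bmat (Fin.last nyR))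
    (Ey1R : Matrix (Fin (nxR + 1) × Fin (nyR + 1)) (Fin (nxR + 1) × Fin (nyR + 1)) ℝ)
    (hEy1R : Ey1R = HxR ⊗ₖ bmat 0)
    -- two-dimensional projections onto the interface grid
    (RL : Matrix (Fin NΓ) (Fin (nxL + 1) × Fin (nyL + 1)) ℝ)
    (hRL : RL = proj2D (Fin.last nxL) RL1)
    (RR : Matrix (Fin NΓ) (Fin (nxR + 1) × Fin (nyR + 1)) ℝ)
    (hRR : RR = proj2D 0 RR1)
    -- wave speeds, SAT parameter, Jacobians
    (lam lamEta σ JL JR : ℝ) (hJL : 0 < JL) (hJR : 0 < JR)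
    -- solution curves and numerical fluxes
    (uL uL' : ℝ → Fin (nxL + 1) × Fin (nyL + 1) → ℝ)
    (uR uR' : ℝ → Fin (nxR + 1) × Fin (nyR + 1) → ℝ)
    (huL : ∀ t, HasDerivAt uL (uL' t) t)
    (huR : ∀ t, HasDerivAt uR (uR' t) t)
    (fL : ℝ → Fin (nxL + 1) × Fin (nyL + 1) → ℝ)
    (fR : ℝ → Fin (nxR + 1) × Fin (nyR + 1) → ℝ)
    (hfL : ∀ t, fL t =
      (lam / 2) • (ExNL *ᵥ uL t + RLᵀ *ᵥ (MΓ *ᵥ (RR *ᵥ uR t)))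
        - (σ * |lam| / 2) • (RLᵀ *ᵥ (MΓ *ᵥ (RR *ᵥ uR t)) - RLᵀ *ᵥ (MΓ *ᵥ (RL *ᵥ uL t))))
    (hfR : ∀ t, fR t =
      (lam / 2) • (Ex1R *ᵥ uR t + RRᵀ *ᵥ (MΓ *ᵥ (RL *ᵥ uL t)))
        - (σ * |lam| / 2) • (RRᵀ *ᵥ (MΓ *ᵥ (RR *ᵥ uR t)) - RRᵀ *ᵥ (MΓ *ᵥ (RL *ᵥ uL t))))
    -- the semi-discrete SBP–SAT scheme
    (hschemeL : ∀ t, JL • (HL *ᵥ uL' t) =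
      -(lam • (QξL *ᵥ uL t)) - lamEta • (QηL *ᵥ uL t) + (lam • (ExNL *ᵥ uL t) - fL t))
    (hschemeR : ∀ t, JR • (HR *ᵥ uR' t) =
      -(lam • (QξR *ᵥ uR t)) - lamEta • (QηR *ᵥ uR t) - (lam • (Ex1R *ᵥ uR t) - fR t)) :
    ∀ t : ℝ,
      JL * ((fun _ => (1:ℝ)) ⬝ᵥ (HL *ᵥ uL' t))
        + JR * ((fun _ => (1:ℝ)) ⬝ᵥ (HR *ᵥ uR' t)) =
      lam * ((fun _ => (1:ℝ)) ⬝ᵥ (Ex1L *ᵥ uL t)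
          - (fun _ => (1:ℝ)) ⬝ᵥ (ExNR *ᵥ uR t))
        - lamEta * ((fun _ => (1:ℝ)) ⬝ᵥ ((EyNL - Ey1L) *ᵥ uL t)
          + (fun _ => (1:ℝ)) ⬝ᵥ ((EyNR - Ey1R) *ᵥ uR t)) := by
  intro t
  have hMs : MΓᵀ = MΓ := by
    have h := hMΓ.1
    ext i j
    simpa using congrFun (congrFun h i) j
  have hHyLs : HyLᵀ = HyL := diag_symm hHyLd
  have hHyRs : HyRᵀ = HyR := diag_symm hHyRd
  have hHxLs : HxLᵀ = HxL := diag_symm hHxLd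
  have hHxRs : HxRᵀ = HxR := diag_symm hHxRd
  -- column sums of the 1D Q matrices
  have cQxL : QxLᵀ *ᵥ (fun _ => (1:ℝ)) =
      Pi.single (Fin.last nxL) 1 - Pi.single 0 1 := by
    have h : QxLᵀ = (bmat (Fin.last nxL) - bmat 0) - QxL := eq_sub_of_add_eq' hQxL
    rw [h, sub_mulVec, sub_mulVec, hQxL1, bmat_mulVec_one, bmat_mulVec_one, sub_zero]
  have cQyL : QyLᵀ *ᵥ (fun _ => (1:ℝ)) =
      Pi.single (Fin.last nyL) 1 - Pi.single 0 1 := by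
    have h : QyLᵀ = (bmat (Fin.last nyL) - bmat 0) - QyL := eq_sub_of_add_eq' hQyL
    rw [h, sub_mulVec, sub_mulVec, hQyL1, bmat_mulVec_one, bmat_mulVec_one, sub_zero]
  have cQxR : QxRᵀ *ᵥ (fun _ => (1:ℝ)) =
      Pi.single (Fin.last nxR) 1 - Pi.single 0 1 := by
    have h : QxRᵀ = (bmat (Fin.last nxR) - bmat 0) - QxR := eq_sub_of_add_eq' hQxR
    rw [h, sub_mulVec, sub_mulVec, hQxR1, bmat_mulVec_one, bmat_mulVec_one, sub_zero]
  have cQyR : QyRᵀ *ᵥ (fun _ => (1:ℝ)) =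
      Pi.single (Fin.last nyR) 1 - Pi.single 0 1 := by
    have h : QyRᵀ = (bmat (Fin.last nyR) - bmat 0) - QyR := eq_sub_of_add_eq' hQyR
    rw [h, sub_mulVec, sub_mulVec, hQyR1, bmat_mulVec_one, bmat_mulVec_one, sub_zero]
  -- column-sum vectors of the 2D operators
  have vQξL : QξLᵀ *ᵥ (fun _ => (1:ℝ)) =
      ExNLᵀ *ᵥ (fun _ => (1:ℝ)) - Ex1Lᵀ *ᵥ (fun _ => (1:ℝ)) := by
    rw [hQξL, hExNL, hEx1L, kron_T_one, kron_T_one, kron_T_one, cQxL,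
      bmat_transpose, bmat_transpose, bmat_mulVec_one, bmat_mulVec_one]
    ext p
    simp only [Pi.sub_apply]
    ring
  have vQηL : QηLᵀ *ᵥ (fun _ => (1:ℝ)) =
      EyNLᵀ *ᵥ (fun _ => (1:ℝ)) - Ey1Lᵀ *ᵥ (fun _ => (1:ℝ)) := by
    rw [hQηL, hEyNL, hEy1L, kron_T_one, kron_T_one, kron_T_one, cQyL,
      bmat_transpose, bmat_transpose, bmat_mulVec_one, bmat_mulVec_one]
    ext p
    simp only [Pi.sub_apply]
    ring
  have vQξR : QξRᵀ *ᵥ (fun _ => (1:ℝ)) =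
      ExNRᵀ *ᵥ (fun _ => (1:ℝ)) - Ex1Rᵀ *ᵥ (fun _ => (1:ℝ)) := by
    rw [hQξR, hExNR, hEx1R, kron_T_one, kron_T_one, kron_T_one, cQxR,
      bmat_transpose, bmat_transpose, bmat_mulVec_one, bmat_mulVec_one]
    ext p
    simp only [Pi.sub_apply]
    ring
  have vQηR : QηRᵀ *ᵥ (fun _ => (1:ℝ)) =
      EyNRᵀ *ᵥ (fun _ => (1:ℝ)) - Ey1Rᵀ *ᵥ (fun _ => (1:ℝ)) := by
    rw [hQηR, hEyNR, hEy1R, kron_T_one, kron_T_one, kron_T_one, cQyR,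
      bmat_transpose, bmat_transpose, bmat_mulVec_one, bmat_mulVec_one]
    ext p
    simp only [Pi.sub_apply]
    ring
  -- projection accuracy
  have vRL : RLᵀ *ᵥ (MΓ *ᵥ (fun _ => (1:ℝ))) = ExNLᵀ *ᵥ (fun _ => (1:ℝ)) := by
    rw [hRL, hExNL, proj2D_T_mulVec, hRL10d, kron_T_one, bmat_transpose,
      bmat_mulVec_one, hHyLs]
    ext p
    simp [Pi.single_apply]
  have vRR : RRᵀ *ᵥ (MΓ *ᵥ (fun _ => (1:ℝ))) = Ex1Rᵀ *ᵥ (fun _ => (1:ℝ)) := by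
    rw [hRR, hEx1R, proj2D_T_mulVec, hRR10d, kron_T_one, bmat_transpose,
      bmat_mulVec_one, hHyRs]
    ext p
    simp [Pi.single_apply]
  have hRLone : RL *ᵥ (fun _ => (1:ℝ)) = fun _ => (1:ℝ) := by
    rw [hRL, proj2D_mulVec_one, hRL10]
  have hRRone : RR *ᵥ (fun _ => (1:ℝ)) = fun _ => (1:ℝ) := by
    rw [hRR, proj2D_mulVec_one, hRR10]
  -- scalar identities for SAT coupling terms
  have keyL : ∀ z, (fun _ => (1:ℝ)) ⬝ᵥ (MΓ *ᵥ (RL *ᵥ z)) =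
      (fun _ => (1:ℝ)) ⬝ᵥ (ExNL *ᵥ z) := by
    intro z
    rw [ones_dot, hMs, dotProduct_mulVec, ← mulVec_transpose, vRL, ← ones_dot]
  have keyR : ∀ z, (fun _ => (1:ℝ)) ⬝ᵥ (MΓ *ᵥ (RR *ᵥ z)) =
      (fun _ => (1:ℝ)) ⬝ᵥ (Ex1R *ᵥ z) := by
    intro z
    rw [ones_dot, hMs, dotProduct_mulVec, ← mulVec_transpose, vRR, ← ones_dot]
  have projL : ∀ (w : Fin NΓ → ℝ), (fun _ => (1:ℝ)) ⬝ᵥ (RLᵀ *ᵥ w) =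
      (fun _ => (1:ℝ)) ⬝ᵥ w := by
    intro w
    rw [ones_dot, transpose_transpose, hRLone]
  have projR : ∀ (w : Fin NΓ → ℝ), (fun _ => (1:ℝ)) ⬝ᵥ (RRᵀ *ᵥ w) =
      (fun _ => (1:ℝ)) ⬝ᵥ w := by
    intro w
    rw [ones_dot, transpose_transpose, hRRone]
  -- abbreviations
  set o1 : Fin (nxL+1) × Fin (nyL+1) → ℝ := fun _ => (1:ℝ) with ho1
  set o2 : Fin (nxR+1) × Fin (nyR+1) → ℝ := fun _ => (1:ℝ) with ho2
  -- take 1ᵀ of both schemes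
  have eL := congrArg (fun v => o1 ⬝ᵥ v) (hschemeL t)
  have eR := congrArg (fun v => o2 ⬝ᵥ v) (hschemeR t)
  simp only [hfL, hfR, dotProduct_add, dotProduct_sub, dotProduct_neg,
    dotProduct_smul, smul_eq_mul] at eL eR
  rw [ho1] at eL
  rw [ho2] at eR
  rw [ones_dot QξL, vQξL, sub_dotProduct, ← ones_dot, ← ones_dot,
    ones_dot QηL, vQηL, sub_dotProduct, ← ones_dot, ← ones_dot,
    projL, projL, keyR, keyL] at eL
  rw [ones_dot QξR, vQξR, sub_dotProduct, ← ones_dot, ← ones_dot,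
    ones_dot QηR, vQηR, sub_dotProduct, ← ones_dot, ← ones_dot,
    projR, projR, keyR, keyL] at eR
  rw [ho1, ho2, sub_mulVec, sub_mulVec, dotProduct_sub, dotProduct_sub]
  rw [← ho1] at eL ⊢
  rw [← ho2] at eR ⊢
  linarith [eL, eR]
end
end

section
/- Under the two-element tensor-product SBP–SAT setting, let η_L ∈ ℝ^{N_{η,L}}, η_R ∈ ℝ^{N_{η,R}}, η_Γ ∈ ℝ^{N_Γ} be the interface node vectors of the two elements and of the intermediate grid, and assume the projection operators are of degree p: R_L^{1D} η_L^k = η_Γ^k, R_R^{1D} η_R^k = η_Γ^k, (R_L^{1D})ᵀ M_Γ η_Γ^k = H_{η,L} η_L^k, and (R_R^{1D})ᵀ M_Γ η_Γ^k = H_{η,R} η_R^k for k = 0, …, p. Let 0 ≤ i, j ≤ p and let x_L ∈ ℝ^{N_{ξ,L}}, x_R ∈ ℝ^{N_{ξ,R}} be ξ-node vectors whose interface entries agree: (x_L)_{N_{ξ,L}} = (x_R)_1. Then for the restrictions of the monomial ξ^i η^j to the two grids, u_L = x_L^i ⊗ η_L^j and u_R = x_R^i ⊗ η_R^j, the numerical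 fluxes reduce to the analytical interface flux, f*_L = λ E_{ξN,L} u_L and f*_R = λ E_{ξ1,R} u_R, and hence both SATs vanish identically: λ E_{ξN,L} u_L − f*_L = 0 and λ E_{ξ1,R} u_R − f*_R = 0. Thus the non-conforming discretization is degree preserving on monomials of total coordinate degree up to p in each direction. -/
open Matrix
open scoped Kronecker

noncomputable section

lemma proj2D_mulVec {nx ny NΓ : ℕ} (i0 : Fin nx) (R1 : Matrix (Fin NΓ) (Fin ny) ℝ)
    (x : Fin nx → ℝ) (η : Fin ny → ℝ) (i j : ℕ) :
    (proj2D i0 R1) *ᵥ (fun q => x q.1 ^ i * η q.2 ^ j)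
      = (x i0 ^ i) • (R1 *ᵥ fun b => η b ^ j) := by
  funext g
  simp only [proj2D, mulVec, dotProduct, of_apply, Fintype.sum_prod_type,
    Pi.smul_apply, smul_eq_mul]
  rw [Finset.sum_eq_single i0]
  · rw [Finset.mul_sum]; exact Finset.sum_congr rfl fun b _ => by simp; ring
  · intro a _ ha; simp [ha]
  · simp

lemma proj2D_transpose_mulVec {nx ny NΓ : ℕ} (i0 : Fin nx)
    (R1 : Matrix (Fin NΓ) (Fin ny) ℝ) (w : Fin NΓ → ℝ) :
    (proj2D i0 R1)ᵀ *ᵥ w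
      = fun q => (if q.1 = i0 then 1 else 0) * (R1ᵀ *ᵥ w) q.2 := by
  funext q
  simp only [proj2D, mulVec, dotProduct, transpose_apply, of_apply, Finset.mul_sum]
  exact Finset.sum_congr rfl fun g _ => by ring

lemma bmat_kron_mulVec {nx ny : ℕ} (i0 : Fin nx) (H : Matrix (Fin ny) (Fin ny) ℝ)
    (x : Fin nx → ℝ) (η : Fin ny → ℝ) (i j : ℕ) :
    (bmat i0 ⊗ₖ H) *ᵥ (fun q => x q.1 ^ i * η q.2 ^ j)
      = fun q => (if q.1 = i0 then 1 else 0) * (x i0 ^ i * (H *ᵥ fun b => η b ^ j) q.2) := by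
  funext q
  simp only [bmat, mulVec, dotProduct, kroneckerMap_apply, vecMulVec_apply,
    Fintype.sum_prod_type, Pi.single_apply]
  rw [Finset.sum_eq_single i0]
  · by_cases h : q.1 = i0
    · simp [h, Finset.mul_sum]
      exact Finset.sum_congr rfl fun b _ => by ring
    · simp [h]
  · intro a _ ha; simp [ha]
  · simp

/-- **Degree preservation of the non-conforming SBP–SAT coupling.**
In the two-element tensor-product SBP–SAT setting, if the projection operators
are of degree `p`, then on restrictions of the monomial `ξ^i η^j`
(`0 ≤ i, j ≤ p`, with matching interface `ξ`-values) the numerical fluxes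
reduce to the analytical interface flux and both SATs vanish identically. -/
theorem nonconforming_degree_preservation
    {nxL nyL nxR nyR NΓ : ℕ} (p : ℕ)
    -- norm matrices (diagonal with positive entries)
    (HyL : Matrix (Fin (nyL + 1)) (Fin (nyL + 1)) ℝ)
    (HyR : Matrix (Fin (nyR + 1)) (Fin (nyR + 1)) ℝ)
    (hHyLd : HyL.IsDiag) (hHyLp : ∀ i, 0 < HyL i i)
    (hHyRd : HyR.IsDiag) (hHyRp : ∀ i, 0 < HyR i i)
    -- intermediate interface grid with symmetric norm matrix
    (MΓ : Matrix (Fin NΓ) (Fin NΓ) ℝ) (hMΓ : MΓᵀ = MΓ)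
    (RL1 : Matrix (Fin NΓ) (Fin (nyL + 1)) ℝ)
    (RR1 : Matrix (Fin NΓ) (Fin (nyR + 1)) ℝ)
    -- interface node vectors of the elements and of the intermediate grid
    (ηL : Fin (nyL + 1) → ℝ) (ηR : Fin (nyR + 1) → ℝ) (ηΓ : Fin NΓ → ℝ)
    -- the projection operators are of degree p
    (hRL1acc : ∀ k ≤ p, (RL1 *ᵥ fun b => ηL b ^ k) = (fun g => ηΓ g ^ k))
    (hRR1acc : ∀ k ≤ p, (RR1 *ᵥ fun b => ηR b ^ k) = (fun g => ηΓ g ^ k))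
    (hRL1dual : ∀ k ≤ p,
      (RL1ᵀ *ᵥ (MΓ *ᵥ fun g => ηΓ g ^ k)) = (HyL *ᵥ fun b => ηL b ^ k))
    (hRR1dual : ∀ k ≤ p,
      (RR1ᵀ *ᵥ (MΓ *ᵥ fun g => ηΓ g ^ k)) = (HyR *ᵥ fun b => ηR b ^ k))
    -- two-dimensional surface operators and projections
    (ExNL : Matrix (Fin (nxL + 1) × Fin (nyL + 1)) (Fin (nxL + 1) × Fin (nyL + 1)) ℝ)
    (hExNL : ExNL = bmat (Fin.last nxL) ⊗ₖ HyL)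
    (Ex1R : Matrix (Fin (nxR + 1) × Fin (nyR + 1)) (Fin (nxR + 1) × Fin (nyR + 1)) ℝ)
    (hEx1R : Ex1R = bmat 0 ⊗ₖ HyR)
    (RL : Matrix (Fin NΓ) (Fin (nxL + 1) × Fin (nyL + 1)) ℝ)
    (hRL : RL = proj2D (Fin.last nxL) RL1)
    (RR : Matrix (Fin NΓ) (Fin (nxR + 1) × Fin (nyR + 1)) ℝ)
    (hRR : RR = proj2D 0 RR1)
    -- monomial data
    (i j : ℕ) (hi : i ≤ p) (hj : j ≤ p)
    (xL : Fin (nxL + 1) → ℝ) (xR : Fin (nxR + 1) → ℝ)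
    (hmatch : xL (Fin.last nxL) = xR 0)
    (uL : Fin (nxL + 1) × Fin (nyL + 1) → ℝ)
    (huL : uL = fun q => xL q.1 ^ i * ηL q.2 ^ j)
    (uR : Fin (nxR + 1) × Fin (nyR + 1) → ℝ)
    (huR : uR = fun q => xR q.1 ^ i * ηR q.2 ^ j)
    -- wave speed, SAT parameter, numerical fluxes
    (lam σ : ℝ)
    (fL : Fin (nxL + 1) × Fin (nyL + 1) → ℝ)
    (hfL : fL =
      (lam / 2) • (ExNL *ᵥ uL + RLᵀ *ᵥ (MΓ *ᵥ (RR *ᵥ uR)))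
        - (σ * |lam| / 2) • (RLᵀ *ᵥ (MΓ *ᵥ (RR *ᵥ uR)) - RLᵀ *ᵥ (MΓ *ᵥ (RL *ᵥ uL))))
    (fR : Fin (nxR + 1) × Fin (nyR + 1) → ℝ)
    (hfR : fR =
      (lam / 2) • (Ex1R *ᵥ uR + RRᵀ *ᵥ (MΓ *ᵥ (RL *ᵥ uL)))
        - (σ * |lam| / 2) • (RRᵀ *ᵥ (MΓ *ᵥ (RR *ᵥ uR)) - RRᵀ *ᵥ (MΓ *ᵥ (RL *ᵥ uL)))) :
    fL = lam • (ExNL *ᵥ uL) ∧ fR = lam • (Ex1R *ᵥ uR) ∧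
    lam • (ExNL *ᵥ uL) - fL = 0 ∧ lam • (Ex1R *ᵥ uR) - fR = 0 := by
  subst hExNL hEx1R hRL hRR
  have hprojL : proj2D (Fin.last nxL) RL1 *ᵥ uL
      = (xL (Fin.last nxL) ^ i) • fun g => ηΓ g ^ j := by
    rw [huL, proj2D_mulVec, hRL1acc j hj]
  have hprojR : proj2D (0 : Fin (nxR + 1)) RR1 *ᵥ uR
      = (xL (Fin.last nxL) ^ i) • fun g => ηΓ g ^ j := by
    rw [huR, proj2D_mulVec, hRR1acc j hj, hmatch]
  have hdualL : (proj2D (Fin.last nxL) RL1)ᵀ *ᵥ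
      (MΓ *ᵥ ((xL (Fin.last nxL) ^ i) • fun g => ηΓ g ^ j))
      = (bmat (Fin.last nxL) ⊗ₖ HyL) *ᵥ uL := by
    rw [mulVec_smul, mulVec_smul, proj2D_transpose_mulVec, hRL1dual j hj, huL,
      bmat_kron_mulVec]
    funext q
    simp only [Pi.smul_apply, smul_eq_mul]
    ring
  have hdualR : (proj2D (0 : Fin (nxR + 1)) RR1)ᵀ *ᵥ
      (MΓ *ᵥ ((xL (Fin.last nxL) ^ i) • fun g => ηΓ g ^ j))
      = (bmat 0 ⊗ₖ HyR) *ᵥ uR := by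
    rw [mulVec_smul, mulVec_smul, proj2D_transpose_mulVec, hRR1dual j hj, huR,
      bmat_kron_mulVec, hmatch]
    funext q
    simp only [Pi.smul_apply, smul_eq_mul]
    ring
  have h1 : fL = lam • ((bmat (Fin.last nxL) ⊗ₖ HyL) *ᵥ uL) := by
    rw [hfL, hprojL, hprojR, hdualL]
    module
  have h2 : fR = lam • ((bmat (0 : Fin (nxR + 1)) ⊗ₖ HyR) *ᵥ uR) := by
    rw [hfR, hprojL, hprojR, hdualR]
    module
  exact ⟨h1, h2, by rw [h1, sub_self], by rw [h2, sub_self]⟩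
end
end

section
/- Under the two-element tensor-product SBP–SAT setting with central coupling (σ = 0), define the interface restriction operators R_{ξN,L} = e_{N_{ξ,L}}ᵀ ⊗ I and R_{ξ1,R} = e_1ᵀ ⊗ I, the interface traces u_{L,N} = R_{ξN,L} u_L and u_{R,1} = R_{ξ1,R} u_R, and the Kozdon–Wilcox operators P_{G2L} = H_{η,L}^{−1} (R_L^{1D})ᵀ M_Γ and P_{R2G} = R_R^{1D}, where H_{η,L} is invertible. Then for all u_L, u_R the SAT of the left element coincides with the Kozdon–Wilcox SAT: λ E_{ξN,L} u_L − f*_L = (λ/2)( E_{ξN,L} u_L − R_Lᵀ M_Γ R_R u_R ) = (λ/2) R_{ξN,L}ᵀ H_{η,L} ( u_{L,N} − P_{G2L} P_{R2G} u_{R,1} ). -/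
open Matrix
open scoped Kronecker

noncomputable section

/-- Interface restriction operator `e_iᵀ ⊗ I`: it restricts a grid function on
the element to the face with `ξ`-index `i`. -/
def restrict2D {nx ny : ℕ} (i : Fin nx) :
    Matrix (Fin ny) (Fin nx × Fin ny) ℝ :=
  Matrix.of fun b q => (if q.1 = i then 1 else 0) * (if q.2 = b then 1 else 0)

/-! Both interface operators of the left element factor through the face restriction
`S = e_Nᵀ ⊗ I`: `E_{ξN,L} = Sᵀ H_{η,L} S` and `R_L = R_L^{1D} S` (likewise `R_R = R_R^{1D} S'`).
Hence `E u_L - R_Lᵀ M_Γ R_R u_R = Sᵀ H_{η,L} (S u_L - H_{η,L}⁻¹ (R_L^{1D})ᵀ M_Γ R_R^{1D} S' u_R)`,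
inserting `H_{η,L} H_{η,L}⁻¹ = 1`; the first identity is `λ - λ/2 = λ/2`. -/

theorem bmat_kronecker_eq_restrict2D {nx ny : ℕ} (i : Fin nx) (H : Matrix (Fin ny) (Fin ny) ℝ) :
    bmat i ⊗ₖ H =
      (restrict2D i : Matrix (Fin ny) _ ℝ)ᵀ * H * (restrict2D i : Matrix (Fin ny) _ ℝ) := by
  ext ⟨p, q⟩ ⟨p', q'⟩
  simp [bmat, restrict2D, mul_apply, vecMulVec_apply, Pi.single_apply]

theorem proj2D_eq_mul_restrict2D {nx ny NΓ : ℕ} (i : Fin nx) (R1 : Matrix (Fin NΓ) (Fin ny) ℝ) :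
    proj2D i R1 = R1 * (restrict2D i : Matrix (Fin ny) _ ℝ) := by
  ext g ⟨p, q⟩
  simp [proj2D, restrict2D, mul_apply, mul_ite, mul_comm]

theorem smul_sub_half_smul_add {K V : Type*} [Field K] [CharZero K] [AddCommGroup V]
    [Module K V] (c : K) (a b : V) :
    c • a - (c / 2) • (a + b) = (c / 2) • (a - b) := by
  module

theorem transpose_mul_mul_mulVec_sub_eq {K m n p q r : Type*} [CommRing K]
    [Fintype m] [Fintype n] [DecidableEq n] [Fintype p] [Fintype q] [Fintype r]
    (S : Matrix n m K) (H : Matrix n n K) (hH : IsUnit H.det) (A : Matrix p n K)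
    (M : Matrix p p K) (B : Matrix p q K) (T : Matrix q r K) (u : m → K) (v : r → K) :
    (Sᵀ * H * S) *ᵥ u - (A * S)ᵀ *ᵥ (M *ᵥ ((B * T) *ᵥ v)) =
      Sᵀ *ᵥ (H *ᵥ (S *ᵥ u - (H⁻¹ * Aᵀ * M) *ᵥ (B *ᵥ (T *ᵥ v)))) := by
  simp only [transpose_mul, mulVec_mulVec, mulVec_sub, ← Matrix.mul_assoc]
  rw [Matrix.mul_assoc Sᵀ H H⁻¹, mul_nonsing_inv _ hH, Matrix.mul_one]

theorem nonconforming_sat_eq_kozdon_wilcox_general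
    {nxL nyL nxR nyR NΓ : ℕ}
    -- norm matrices (diagonal with positive entries); H_{η,L} invertible
    (HyL : Matrix (Fin (nyL + 1)) (Fin (nyL + 1)) ℝ)
    (hHyLinv : IsUnit HyL.det)
    -- intermediate (glue) grid with symmetric norm matrix
    (MΓ : Matrix (Fin NΓ) (Fin NΓ) ℝ)
    (RL1 : Matrix (Fin NΓ) (Fin (nyL + 1)) ℝ)
    (RR1 : Matrix (Fin NΓ) (Fin (nyR + 1)) ℝ)
    -- two-dimensional surface operator and projections
    (ExNL : Matrix (Fin (nxL + 1) × Fin (nyL + 1)) (Fin (nxL + 1) × Fin (nyL + 1)) ℝ)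
    (hExNL : ExNL = bmat (Fin.last nxL) ⊗ₖ HyL)
    (RL : Matrix (Fin NΓ) (Fin (nxL + 1) × Fin (nyL + 1)) ℝ)
    (hRL : RL = proj2D (Fin.last nxL) RL1)
    (RR : Matrix (Fin NΓ) (Fin (nxR + 1) × Fin (nyR + 1)) ℝ)
    (hRR : RR = proj2D 0 RR1)
    -- interface restriction operators and traces
    (RxNL : Matrix (Fin (nyL + 1)) (Fin (nxL + 1) × Fin (nyL + 1)) ℝ)
    (hRxNL : RxNL = restrict2D (Fin.last nxL))
    (Rx1R : Matrix (Fin (nyR + 1)) (Fin (nxR + 1) × Fin (nyR + 1)) ℝ)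
    (hRx1R : Rx1R = restrict2D 0)
    (uL : Fin (nxL + 1) × Fin (nyL + 1) → ℝ)
    (uR : Fin (nxR + 1) × Fin (nyR + 1) → ℝ)
    (uLN : Fin (nyL + 1) → ℝ) (huLN : uLN = RxNL *ᵥ uL)
    (uR1 : Fin (nyR + 1) → ℝ) (huR1 : uR1 = Rx1R *ᵥ uR)
    -- Kozdon–Wilcox glue operators
    (PG2L : Matrix (Fin (nyL + 1)) (Fin NΓ) ℝ)
    (hPG2L : PG2L = HyL⁻¹ * RL1ᵀ * MΓ)
    (PR2G : Matrix (Fin NΓ) (Fin (nyR + 1)) ℝ)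
    (hPR2G : PR2G = RR1)
    -- central coupling: wave speed λ, SAT parameter σ = 0
    (lam : ℝ)
    (fL : Fin (nxL + 1) × Fin (nyL + 1) → ℝ)
    (hfL : fL = (lam / 2) • (ExNL *ᵥ uL + RLᵀ *ᵥ (MΓ *ᵥ (RR *ᵥ uR)))) :
    lam • (ExNL *ᵥ uL) - fL =
      (lam / 2) • (ExNL *ᵥ uL - RLᵀ *ᵥ (MΓ *ᵥ (RR *ᵥ uR))) ∧
    (lam / 2) • (ExNL *ᵥ uL - RLᵀ *ᵥ (MΓ *ᵥ (RR *ᵥ uR))) =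
      (lam / 2) • (RxNLᵀ *ᵥ (HyL *ᵥ (uLN - PG2L *ᵥ (PR2G *ᵥ uR1)))) := by
  subst hExNL hRL hRR hRxNL hRx1R huLN huR1 hPG2L hPR2G hfL
  refine ⟨smul_sub_half_smul_add _ _ _, ?_⟩
  rw [bmat_kronecker_eq_restrict2D, proj2D_eq_mul_restrict2D, proj2D_eq_mul_restrict2D,
    transpose_mul_mul_mulVec_sub_eq _ _ hHyLinv]

/-- **Equivalence with the Kozdon–Wilcox SAT for central coupling (`σ = 0`).**
In the two-element tensor-product SBP–SAT setting with central coupling, the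
SAT of the left element coincides with the Kozdon–Wilcox SAT built from the
glue-grid operators `P_{G2L} = H_{η,L}⁻¹ (R_L^{1D})ᵀ M_Γ` and `P_{R2G} = R_R^{1D}`. -/
theorem nonconforming_sat_eq_kozdon_wilcox
    {nxL nyL nxR nyR NΓ : ℕ}
    -- norm matrices (diagonal with positive entries); H_{η,L} invertible
    (HyL : Matrix (Fin (nyL + 1)) (Fin (nyL + 1)) ℝ)
    (HyR : Matrix (Fin (nyR + 1)) (Fin (nyR + 1)) ℝ)
    (hHyLd : HyL.IsDiag) (hHyLp : ∀ i, 0 < HyL i i)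
    (hHyRd : HyR.IsDiag) (hHyRp : ∀ i, 0 < HyR i i)
    (hHyLinv : IsUnit HyL.det)
    -- intermediate (glue) grid with symmetric norm matrix
    (MΓ : Matrix (Fin NΓ) (Fin NΓ) ℝ) (hMΓ : MΓᵀ = MΓ)
    (RL1 : Matrix (Fin NΓ) (Fin (nyL + 1)) ℝ)
    (RR1 : Matrix (Fin NΓ) (Fin (nyR + 1)) ℝ)
    -- two-dimensional surface operator and projections
    (ExNL : Matrix (Fin (nxL + 1) × Fin (nyL + 1)) (Fin (nxL + 1) × Fin (nyL + 1)) ℝ)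
    (hExNL : ExNL = bmat (Fin.last nxL) ⊗ₖ HyL)
    (RL : Matrix (Fin NΓ) (Fin (nxL + 1) × Fin (nyL + 1)) ℝ)
    (hRL : RL = proj2D (Fin.last nxL) RL1)
    (RR : Matrix (Fin NΓ) (Fin (nxR + 1) × Fin (nyR + 1)) ℝ)
    (hRR : RR = proj2D 0 RR1)
    -- interface restriction operators and traces
    (RxNL : Matrix (Fin (nyL + 1)) (Fin (nxL + 1) × Fin (nyL + 1)) ℝ)
    (hRxNL : RxNL = restrict2D (Fin.last nxL))
    (Rx1R : Matrix (Fin (nyR + 1)) (Fin (nxR + 1) × Fin (nyR + 1)) ℝ)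
    (hRx1R : Rx1R = restrict2D 0)
    (uL : Fin (nxL + 1) × Fin (nyL + 1) → ℝ)
    (uR : Fin (nxR + 1) × Fin (nyR + 1) → ℝ)
    (uLN : Fin (nyL + 1) → ℝ) (huLN : uLN = RxNL *ᵥ uL)
    (uR1 : Fin (nyR + 1) → ℝ) (huR1 : uR1 = Rx1R *ᵥ uR)
    -- Kozdon–Wilcox glue operators
    (PG2L : Matrix (Fin (nyL + 1)) (Fin NΓ) ℝ)
    (hPG2L : PG2L = HyL⁻¹ * RL1ᵀ * MΓ)
    (PR2G : Matrix (Fin NΓ) (Fin (nyR + 1)) ℝ)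
    (hPR2G : PR2G = RR1)
    -- central coupling: wave speed λ, SAT parameter σ = 0
    (lam : ℝ)
    (fL : Fin (nxL + 1) × Fin (nyL + 1) → ℝ)
    (hfL : fL = (lam / 2) • (ExNL *ᵥ uL + RLᵀ *ᵥ (MΓ *ᵥ (RR *ᵥ uR)))) :
    lam • (ExNL *ᵥ uL) - fL =
      (lam / 2) • (ExNL *ᵥ uL - RLᵀ *ᵥ (MΓ *ᵥ (RR *ᵥ uR))) ∧
    (lam / 2) • (ExNL *ᵥ uL - RLᵀ *ᵥ (MΓ *ᵥ (RR *ᵥ uR))) =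
      (lam / 2) • (RxNLᵀ *ᵥ (HyL *ᵥ (uLN - PG2L *ᵥ (PR2G *ᵥ uR1)))) :=
  nonconforming_sat_eq_kozdon_wilcox_general HyL hHyLinv MΓ RL1 RR1 ExNL hExNL RL hRL RR hRR RxNL
    hRxNL Rx1R hRx1R uL uR uLN huLN uR1 huR1 PG2L hPG2L PR2G hPR2G lam fL hfL
end
end
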